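/- For all complex ξ₂, ξ₃, p, q, η, x with Re(ξ₃) > Re(ξ₂) > 0, Re(p) > 0, Re(q) > 0 and Re(η) > -1, the extended confluent hypergeometric function admits the integral representation Φ_η^{p,q}(ξ₂;ξ₃;x) = (1/B(ξ₂, ξ₃-ξ₂)) ∫₀¹ y^{ξ₂-1} (1-y)^{ξ₃-ξ₂-1} e^{xy} S_η(-p/y) S_η(-q/(1-y)) dy, where B denotes the classical beta function. -/

import Mathlib

open MeasureTheory Complex

/-- The Bessel–Struve kernel function, defined by its power series. -/
noncomputable def besselStruve (η t : ℂ) : ℂ :=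
  (Complex.Gamma (η + 1) / (Real.sqrt Real.pi : ℂ)) *
    ∑' m : ℕ, t ^ m * Complex.Gamma (((m : ℂ) + 1) / 2) /
      ((m.factorial : ℂ) * Complex.Gamma ((m : ℂ) / 2 + η + 1))

/-- The extended beta function `B_η^{p,q}(ξ₁, ξ₂)`. -/
noncomputable def extBeta (η p q ξ₁ ξ₂ : ℂ) : ℂ :=
  ∫ y in (0:ℝ)..1, (y : ℂ) ^ (ξ₁ - 1) * ((1 : ℂ) - (y : ℂ)) ^ (ξ₂ - 1) *
    besselStruve η (-p / (y : ℂ)) * besselStruve η (-q / (1 - (y : ℂ)))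

/-- The Pochhammer symbol `(a)_l = Γ(a + l)/Γ(a)`. -/
noncomputable def poch (a : ℂ) (l : ℕ) : ℂ := Complex.Gamma (a + l) / Complex.Gamma a

/-- The extended Gauss hypergeometric function `F_η^{p,q}(ξ₁, ξ₂; ξ₃; x)`. -/
noncomputable def extF (η p q ξ₁ ξ₂ ξ₃ x : ℂ) : ℂ :=
  ∑' l : ℕ, poch ξ₁ l * extBeta η p q (ξ₂ + l) (ξ₃ - ξ₂) * x ^ l /
    (Complex.betaIntegral ξ₂ (ξ₃ - ξ₂) * (l.factorial : ℂ))

/-- The extended confluent hypergeometric function `Φ_η^{p,q}(ξ₂; ξ₃; x)`. -/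
noncomputable def extPhi (η p q ξ₂ ξ₃ x : ℂ) : ℂ :=
  ∑' l : ℕ, extBeta η p q (ξ₂ + l) (ξ₃ - ξ₂) * x ^ l /
    (Complex.betaIntegral ξ₂ (ξ₃ - ξ₂) * (l.factorial : ℂ))

/-!
For `Re η > -1` the Bessel–Struve kernel has the integral representation
`S_η(t) = 2Γ(η+1)/(√π Γ(η+3/2)) ∫₀¹ ((η+1) + ts/2) e^{ts} (1-s²)^{η+1/2} ds`
(an integrated-by-parts form of the Poisson-type formula, which itself needs `Re η > -1/2`):
expanding `e^{ts}` turns it into the defining series, because the moments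
`∫₀¹ s^k (1-s²)^{c-1} ds = B((k+1)/2, c)/2` follow from the substitution `s ↦ s²`.
For `t = -p/y` with `Re p > 0`, the bound `u e^{-u} ≤ e^{-1}` makes this integral bounded
uniformly in `y > 0`, so the kernel of the extended beta function is dominated by the classical
beta integrand. Expanding `e^{xy}` and integrating termwise, with `e^{|x|}` as dominating
factor, gives the representation of `Φ_η^{p,q}`.
-/

open Set

theorem HasSum.natCast_mul_of_succ {z A : ℂ} {a : ℕ → ℂ}
    (h : HasSum (fun m : ℕ => z ^ m / m.factorial * a (m + 1)) A) :
    HasSum (fun m : ℕ => m * (z ^ m / m.factorial * a m)) (z * A) := by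
  rw [← hasSum_nat_add_iff' 1, Finset.sum_range_one, Nat.cast_zero, zero_mul, sub_zero]
  refine (h.mul_left z).congr_fun fun m => ?_
  rw [Nat.factorial_succ]
  push_cast
  field_simp
  ring

section TermwiseIntegration

variable {μ : Measure ℝ} {g : ℝ → ℂ}

theorem integrable_ofReal_pow_mul (hg : Integrable g μ) (hμ : ∀ᵐ s ∂μ, |s| ≤ 1) (m : ℕ) :
    Integrable (fun s : ℝ => (s : ℂ) ^ m * g s) μ :=
  hg.bdd_mul (c := 1) (by fun_prop) <| hμ.mono fun s hs => by
    simpa [norm_pow] using pow_le_one₀ (abs_nonneg s) hs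

theorem integrable_cexp_mul (hg : Integrable g μ) (hμ : ∀ᵐ s ∂μ, |s| ≤ 1) (z : ℂ) :
    Integrable (fun s : ℝ => cexp (z * s) * g s) μ :=
  hg.bdd_mul (c := Real.exp ‖z‖) (by fun_prop) <| hμ.mono fun s hs => by
    rw [Complex.norm_exp, Real.exp_le_exp]
    calc (z * s).re ≤ ‖z * s‖ := re_le_norm _
      _ = ‖z‖ * |s| := by rw [norm_mul, norm_real, Real.norm_eq_abs]
      _ ≤ ‖z‖ := mul_le_of_le_one_right (norm_nonneg z) hs

theorem hasSum_integral_cexp_mul (hg : Integrable g μ) (hμ : ∀ᵐ s ∂μ, |s| ≤ 1) (z : ℂ) :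
    HasSum (fun m : ℕ => z ^ m / m.factorial * ∫ s, (s : ℂ) ^ m * g s ∂μ)
      (∫ s, cexp (z * s) * g s ∂μ) := by
  have hint := integrable_ofReal_pow_mul hg hμ
  have hnorm : ∀ m : ℕ, ∫ s, ‖z ^ m / m.factorial * ((s : ℂ) ^ m * g s)‖ ∂μ
      ≤ ‖z‖ ^ m / m.factorial * ∫ s, ‖g s‖ ∂μ := by
    intro m
    simp only [norm_mul (z ^ m / (m.factorial : ℂ)), integral_const_mul, norm_div, norm_pow,
      norm_natCast]
    refine mul_le_mul_of_nonneg_left ?_ (by positivity)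
    refine integral_mono_ae (hint m).norm hg.norm (hμ.mono fun s hs => ?_)
    simp only [norm_mul, norm_pow, norm_real, Real.norm_eq_abs]
    exact mul_le_of_le_one_left (norm_nonneg _) (pow_le_one₀ (abs_nonneg s) hs)
  have hsum := hasSum_integral_of_summable_integral_norm (fun m => (hint m).const_mul _)
    (Summable.of_nonneg_of_le (fun m => integral_nonneg fun s => norm_nonneg _) hnorm
      ((Real.summable_pow_div_factorial ‖z‖).mul_right _))
  have hexp : ∀ s : ℝ,
      cexp (z * s) * g s = ∑' m : ℕ, z ^ m / m.factorial * ((s : ℂ) ^ m * g s) := by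
    intro s
    rw [exp_eq_exp_ℂ, ← (NormedSpace.expSeries_div_hasSum_exp (z * s)).tsum_eq,
      ← tsum_mul_right]
    congr 1 with m
    ring
  simpa only [integral_const_mul, hexp] using hsum

end TermwiseIntegration

section SquareSubstitution

lemma sq_image_Ioo_zero_one : (fun s : ℝ => s ^ 2) '' Ioo 0 1 = Ioo 0 1 := by
  ext u
  constructor
  · rintro ⟨s, ⟨hs0, hs1⟩, rfl⟩
    exact ⟨by positivity, by nlinarith⟩
  · rintro ⟨hu0, hu1⟩
    refine ⟨√u, ⟨Real.sqrt_pos.2 hu0, ?_⟩, Real.sq_sqrt hu0.le⟩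
    simpa using Real.sqrt_lt_sqrt hu0.le hu1

lemma hasDerivWithinAt_sq_Ioo_zero_one :
    ∀ s ∈ Ioo (0 : ℝ) 1, HasDerivWithinAt (fun s : ℝ => s ^ 2) (2 * s) (Ioo 0 1) s :=
  fun s _ => by simpa using (hasDerivAt_pow 2 s).hasDerivWithinAt

lemma injOn_sq_Ioo_zero_one : InjOn (fun s : ℝ => s ^ 2) (Ioo 0 1) :=
  (pow_left_strictMonoOn₀ two_ne_zero).injOn.mono fun _ hs => le_of_lt hs.1

variable {a c : ℂ}

lemma abs_two_mul_smul_betaIntegrand_sq {s : ℝ} (hs : 0 < s) :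
    |2 * s| • (((s ^ 2 : ℝ) : ℂ) ^ (a - 1) * (1 - ((s ^ 2 : ℝ) : ℂ)) ^ (c - 1))
      = 2 * ((s : ℂ) ^ (2 * a - 1) * ((1 - s ^ 2 : ℝ) : ℂ) ^ (c - 1)) := by
  have hs' : (s : ℂ) ≠ 0 := ofReal_ne_zero.2 hs.ne'
  have harg : (2 : ℝ) * (s : ℂ).arg = 0 := by rw [arg_ofReal_of_nonneg hs.le, mul_zero]
  have hsq : ((s ^ 2 : ℝ) : ℂ) ^ (a - 1) = (s : ℂ) ^ (2 * a - 2) := by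
    rw [show 2 * a - 2 = 2 * (a - 1) by ring, ofReal_pow,
      cpow_ofNat_mul' (by rw [harg]; linarith [Real.pi_pos]) (by rw [harg]; positivity)]
  rw [abs_of_pos (by positivity), real_smul, hsq, show 2 * a - 1 = (2 * a - 2) + 1 by ring,
    cpow_add _ _ hs', cpow_one]
  push_cast
  ring

theorem integrableOn_cpow_mul_one_sub_sq_cpow (ha : 0 < a.re) (hc : 0 < c.re) :
    IntegrableOn (fun s : ℝ => (s : ℂ) ^ (2 * a - 1) * ((1 - s ^ 2 : ℝ) : ℂ) ^ (c - 1))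
      (Ioo 0 1) := by
  have hbeta : IntegrableOn (fun u : ℝ => (u : ℂ) ^ (a - 1) * (1 - (u : ℂ)) ^ (c - 1))
      ((fun s : ℝ => s ^ 2) '' Ioo 0 1) := by
    rw [sq_image_Ioo_zero_one, ← integrableOn_Ioc_iff_integrableOn_Ioo,
      ← intervalIntegrable_iff_integrableOn_Ioc_of_le zero_le_one]
    exact betaIntegral_convergent ha hc
  rw [integrableOn_image_iff_integrableOn_abs_deriv_smul measurableSet_Ioo
    hasDerivWithinAt_sq_Ioo_zero_one injOn_sq_Ioo_zero_one] at hbeta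
  refine IntegrableOn.congr_fun (hbeta.const_mul (1 / 2 : ℂ)) (fun s hs => ?_) measurableSet_Ioo
  rw [abs_two_mul_smul_betaIntegrand_sq hs.1]
  ring

theorem integral_cpow_mul_one_sub_sq_cpow :
    ∫ s in Ioo (0 : ℝ) 1, (s : ℂ) ^ (2 * a - 1) * ((1 - s ^ 2 : ℝ) : ℂ) ^ (c - 1)
      = betaIntegral a c / 2 := by
  have h := integral_image_eq_integral_abs_deriv_smul measurableSet_Ioo
    hasDerivWithinAt_sq_Ioo_zero_one injOn_sq_Ioo_zero_one
    (fun u : ℝ => (u : ℂ) ^ (a - 1) * (1 - (u : ℂ)) ^ (c - 1))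
  rw [sq_image_Ioo_zero_one, ← integral_Ioc_eq_integral_Ioo,
    ← intervalIntegral.integral_of_le zero_le_one,
    setIntegral_congr_fun measurableSet_Ioo fun s hs => abs_two_mul_smul_betaIntegrand_sq hs.1,
    integral_const_mul] at h
  rw [betaIntegral, h]
  ring

end SquareSubstitution

theorem add_sub_one_mul_betaIntegral {u v : ℂ} (hu : 0 < u.re) (hv : 0 < v.re)
    (huv : u + v - 1 ≠ 0) :
    (u + v - 1) * betaIntegral u v = Gamma u * Gamma v / Gamma (u + v - 1) := by
  have hrec : Gamma (u + v) = (u + v - 1) * Gamma (u + v - 1) := by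
    rw [← Gamma_add_one _ huv, sub_add_cancel]
  have hne : Gamma (u + v - 1) ≠ 0 := fun h =>
    Gamma_ne_zero_of_re_pos (add_pos hu hv) (by rw [hrec, h, mul_zero])
  rw [betaIntegral_eq_Gamma_mul_div _ _ hu hv, hrec]
  field_simp

section BesselStruve

variable {η : ℂ}

noncomputable def besselStruveWeight (η : ℂ) (s : ℝ) : ℂ := ((1 - s ^ 2 : ℝ) : ℂ) ^ (η + 1 / 2)

lemma re_add_three_halves_pos (hη : -1 < η.re) : 0 < (η + 3 / 2).re := by
  simp only [add_re, div_ofNat_re]; norm_num; linarith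

lemma pow_mul_besselStruveWeight (k : ℕ) :
    (fun s : ℝ => (s : ℂ) ^ k * besselStruveWeight η s) = fun s : ℝ =>
      (s : ℂ) ^ (2 * (((k : ℂ) + 1) / 2) - 1) * ((1 - s ^ 2 : ℝ) : ℂ) ^ (η + 3 / 2 - 1) := by
  funext s
  rw [show 2 * (((k : ℂ) + 1) / 2) - 1 = k by ring, cpow_natCast,
    show η + 3 / 2 - 1 = η + 1 / 2 by ring, besselStruveWeight]

lemma re_natCast_add_one_div_two_pos (k : ℕ) : 0 < (((k : ℂ) + 1) / 2).re := by
  simp only [div_ofNat_re, add_re, natCast_re, one_re]; positivity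

theorem integrableOn_pow_mul_besselStruveWeight (hη : -1 < η.re) (k : ℕ) :
    IntegrableOn (fun s : ℝ => (s : ℂ) ^ k * besselStruveWeight η s) (Ioo 0 1) := by
  rw [pow_mul_besselStruveWeight]
  exact integrableOn_cpow_mul_one_sub_sq_cpow (re_natCast_add_one_div_two_pos k)
    (re_add_three_halves_pos hη)

theorem integral_pow_mul_besselStruveWeight (k : ℕ) :
    ∫ s in Ioo (0 : ℝ) 1, (s : ℂ) ^ k * besselStruveWeight η s
      = betaIntegral (((k : ℂ) + 1) / 2) (η + 3 / 2) / 2 := by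
  rw [pow_mul_besselStruveWeight, integral_cpow_mul_one_sub_sq_cpow]

lemma Gamma_div_Gamma_eq_mul_betaIntegral (hη : -1 < η.re) (m : ℕ) :
    Gamma (((m : ℂ) + 1) / 2) / Gamma ((m : ℂ) / 2 + η + 1)
      = ((m : ℂ) / 2 + η + 1) * betaIntegral (((m : ℂ) + 1) / 2) (η + 3 / 2) /
          Gamma (η + 3 / 2) := by
  have hz : 0 < ((m : ℂ) / 2 + η + 1).re := by
    simp only [add_re, div_ofNat_re, natCast_re, one_re]
    linarith [(by positivity : (0 : ℝ) ≤ m / 2)]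
  have hu : ((m : ℂ) + 1) / 2 + (η + 3 / 2) - 1 = m / 2 + η + 1 := by ring
  have hB := add_sub_one_mul_betaIntegral (re_natCast_add_one_div_two_pos m)
    (re_add_three_halves_pos hη) (by rw [hu]; exact ne_of_apply_ne re hz.ne')
  rw [hu] at hB
  rw [hB, mul_div_right_comm,
    mul_div_cancel_right₀ _ (Gamma_ne_zero_of_re_pos (re_add_three_halves_pos hη))]

lemma ae_abs_le_one_restrict_Ioo : ∀ᵐ s ∂(volume.restrict (Ioo (0 : ℝ) 1)), |s| ≤ 1 :=
  ae_restrict_of_forall_mem measurableSet_Ioo fun _ hs => abs_le.2 ⟨by linarith [hs.1], hs.2.le⟩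

theorem hasSum_besselStruve_series (hη : -1 < η.re) (t : ℂ) :
    HasSum (fun m : ℕ => t ^ m * Gamma (((m : ℂ) + 1) / 2) /
        ((m.factorial : ℂ) * Gamma ((m : ℂ) / 2 + η + 1)))
      (2 / Gamma (η + 3 / 2) * ∫ s in Ioo (0 : ℝ) 1,
        ((η + 1) + t * s / 2) * cexp (t * s) * besselStruveWeight η s) := by
  set w := besselStruveWeight η
  have hw : IntegrableOn w (Ioo 0 1) := by
    simpa using integrableOn_pow_mul_besselStruveWeight hη 0
  have hsw : IntegrableOn (fun s : ℝ => (s : ℂ) * w s) (Ioo 0 1) := by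
    simpa using integrableOn_pow_mul_besselStruveWeight hη 1
  have hval1 : ∀ m : ℕ, ∫ s in Ioo (0 : ℝ) 1, (s : ℂ) ^ m * ((s : ℂ) * w s)
      = betaIntegral ((((m + 1 : ℕ) : ℂ) + 1) / 2) (η + 3 / 2) / 2 := fun m => by
    simp only [← mul_assoc, ← pow_succ, w, integral_pow_mul_besselStruveWeight]
  have h0 := hasSum_integral_cexp_mul hw ae_abs_le_one_restrict_Ioo t
  have h1 := hasSum_integral_cexp_mul hsw ae_abs_le_one_restrict_Ioo t
  simp only [w, integral_pow_mul_besselStruveWeight] at h0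
  simp only [hval1] at h1
  have hsplit : ∫ s in Ioo (0 : ℝ) 1, ((η + 1) + t * s / 2) * cexp (t * s) * w s
      = (η + 1) * (∫ s in Ioo (0 : ℝ) 1, cexp (t * s) * w s)
        + 1 / 2 * (t * ∫ s in Ioo (0 : ℝ) 1, cexp (t * s) * ((s : ℂ) * w s)) := by
    rw [← integral_const_mul, ← integral_const_mul, ← integral_const_mul, ← integral_add
      ((integrable_cexp_mul hw ae_abs_le_one_restrict_Ioo t).const_mul _)
      (((integrable_cexp_mul hsw ae_abs_le_one_restrict_Ioo t).const_mul _).const_mul _)]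
    congr 1 with s
    ring
  rw [hsplit]
  -- The `t s / 2` part contributes `m / 2 · ∫ sᵐ w` to the `m`-th coefficient, and
  -- `(m / 2 + η + 1) · B((m + 1) / 2, η + 3 / 2)` is the defining coefficient up to `Γ(η + 3 / 2)`.
  refine (((h0.mul_left (η + 1)).add
    ((h1.natCast_mul_of_succ (a := fun k : ℕ =>
      betaIntegral (((k : ℂ) + 1) / 2) (η + 3 / 2) / 2)).mul_left (1 / 2))).mul_left
        (2 / Gamma (η + 3 / 2))).congr_fun fun m => ?_
  calc _ = t ^ m / m.factorial * (Gamma (((m : ℂ) + 1) / 2) / Gamma ((m : ℂ) / 2 + η + 1)) := by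
        ring
    _ = _ := by rw [Gamma_div_Gamma_eq_mul_betaIntegral hη]; ring

theorem besselStruve_eq_integral (hη : -1 < η.re) (t : ℂ) :
    besselStruve η t = 2 * Gamma (η + 1) / (Real.sqrt Real.pi * Gamma (η + 3 / 2)) *
      ∫ s in Ioo (0 : ℝ) 1, ((η + 1) + t * s / 2) * cexp (t * s) * besselStruveWeight η s := by
  rw [besselStruve, (hasSum_besselStruve_series hη t).tsum_eq]
  ring

end BesselStruve

section BesselStruveBounds

variable {η : ℂ}

theorem measurable_besselStruve (hη : -1 < η.re) : Measurable (besselStruve η) := by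
  have h : besselStruve η = fun t => 2 * Gamma (η + 1) / (Real.sqrt Real.pi * Gamma (η + 3 / 2)) *
      ∫ s in Ioo (0 : ℝ) 1, ((η + 1) + t * s / 2) * cexp (t * s) * besselStruveWeight η s :=
    funext (besselStruve_eq_integral hη)
  rw [h]
  refine (StronglyMeasurable.integral_prod_right ?_).measurable.const_mul _
  refine Measurable.stronglyMeasurable ?_
  unfold besselStruveWeight
  fun_prop

lemma norm_add_mul_cexp_le {t : ℂ} (ht : t.re < 0) {s : ℝ} (hs : 0 ≤ s) :
    ‖((η + 1) + t * s / 2) * cexp (t * s)‖ ≤ ‖η + 1‖ + ‖t‖ / (2 * -t.re) * Real.exp (-1) := by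
  set a := -t.re
  have ha : 0 < a := neg_pos.2 ht
  have hexp : ‖cexp (t * s)‖ = Real.exp (-(a * s)) := by
    rw [norm_exp, re_mul_ofReal, neg_mul_eq_neg_mul, neg_neg]
  have hlin : ‖(η + 1) + t * s / 2‖ ≤ ‖η + 1‖ + ‖t‖ * s / 2 := by
    refine (norm_add_le _ _).trans_eq ?_
    rw [norm_div, norm_mul, norm_real, Real.norm_of_nonneg hs, RCLike.norm_ofNat]
  rw [norm_mul, hexp]
  calc ‖(η + 1) + t * s / 2‖ * Real.exp (-(a * s))
      ≤ (‖η + 1‖ + ‖t‖ * s / 2) * Real.exp (-(a * s)) := by gcongr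
    _ = ‖η + 1‖ * Real.exp (-(a * s)) + ‖t‖ / (2 * a) * (a * s * Real.exp (-(a * s))) := by
        field_simp
    _ ≤ ‖η + 1‖ * 1 + ‖t‖ / (2 * a) * Real.exp (-1) := by
        gcongr
        · exact Real.exp_le_one_iff.2 (neg_nonpos.2 (by positivity))
        · exact Real.mul_exp_neg_le_exp_neg_one _
    _ = _ := by rw [mul_one]

theorem norm_besselStruve_le (hη : -1 < η.re) {t : ℂ} (ht : t.re < 0) :
    ‖besselStruve η t‖ ≤ ‖2 * Gamma (η + 1) / (Real.sqrt Real.pi * Gamma (η + 3 / 2))‖ *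
      ((‖η + 1‖ + ‖t‖ / (2 * -t.re) * Real.exp (-1)) *
        ∫ s in Ioo (0 : ℝ) 1, ‖besselStruveWeight η s‖) := by
  have hw : IntegrableOn (besselStruveWeight η) (Ioo 0 1) := by
    simpa using integrableOn_pow_mul_besselStruveWeight hη 0
  rw [besselStruve_eq_integral hη, norm_mul, ← integral_const_mul]
  gcongr
  refine norm_integral_le_of_norm_le (hw.norm.const_mul _) ?_
  refine ae_restrict_of_forall_mem measurableSet_Ioo fun s hs => ?_
  rw [norm_mul]
  gcongr
  exact norm_add_mul_cexp_le ht hs.1.le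

theorem exists_norm_besselStruve_neg_div_le (hη : -1 < η.re) {p : ℂ} (hp : 0 < p.re) :
    ∃ C, ∀ y : ℝ, 0 < y → ‖besselStruve η (-p / y)‖ ≤ C := by
  refine ⟨‖2 * Gamma (η + 1) / (Real.sqrt Real.pi * Gamma (η + 3 / 2))‖ *
      ((‖η + 1‖ + ‖p‖ / (2 * p.re) * Real.exp (-1)) *
        ∫ s in Ioo (0 : ℝ) 1, ‖besselStruveWeight η s‖), fun y hy => ?_⟩
  have hre : (-p / y).re = -(p.re / y) := by rw [div_ofReal_re, neg_re, neg_div]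
  convert norm_besselStruve_le hη (t := -p / y) (by rw [hre]; exact neg_neg_of_pos (by positivity))
    using 5
  rw [hre, norm_div, norm_neg, norm_real, Real.norm_of_nonneg hy.le, neg_neg]
  field_simp

end BesselStruveBounds

section ExtendedBeta

noncomputable def extBetaKernel (η p q ξ₁ ξ₂ : ℂ) (y : ℝ) : ℂ :=
  (y : ℂ) ^ (ξ₁ - 1) * ((1 : ℂ) - (y : ℂ)) ^ (ξ₂ - 1) *
    besselStruve η (-p / (y : ℂ)) * besselStruve η (-q / (1 - (y : ℂ)))

variable {η p q ξ₁ ξ₂ : ℂ}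

lemma extBeta_eq_integral_extBetaKernel :
    extBeta η p q ξ₁ ξ₂ = ∫ y in Ioo (0 : ℝ) 1, extBetaKernel η p q ξ₁ ξ₂ y := by
  rw [extBeta, intervalIntegral.integral_of_le zero_le_one, integral_Ioc_eq_integral_Ioo]
  rfl

lemma extBetaKernel_add_natCast {y : ℝ} (hy : 0 < y) (l : ℕ) :
    extBetaKernel η p q (ξ₁ + l) ξ₂ y = (y : ℂ) ^ l * extBetaKernel η p q ξ₁ ξ₂ y := by
  rw [extBetaKernel, extBetaKernel, show ξ₁ + l - 1 = (ξ₁ - 1) + l by ring,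
    cpow_add _ _ (ofReal_ne_zero.2 hy.ne'), cpow_natCast]
  ring

theorem integrableOn_extBetaKernel (hη : -1 < η.re) (hp : 0 < p.re) (hq : 0 < q.re)
    (h₁ : 0 < ξ₁.re) (h₂ : 0 < ξ₂.re) :
    IntegrableOn (extBetaKernel η p q ξ₁ ξ₂) (Ioo 0 1) := by
  obtain ⟨Cp, hCp⟩ := exists_norm_besselStruve_neg_div_le hη hp
  obtain ⟨Cq, hCq⟩ := exists_norm_besselStruve_neg_div_le hη hq
  have hbeta : IntegrableOn (fun y : ℝ => (y : ℂ) ^ (ξ₁ - 1) * (1 - (y : ℂ)) ^ (ξ₂ - 1))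
      (Ioo 0 1) := by
    rw [← integrableOn_Ioc_iff_integrableOn_Ioo,
      ← intervalIntegrable_iff_integrableOn_Ioc_of_le zero_le_one]
    exact betaIntegral_convergent h₁ h₂
  have hS := measurable_besselStruve hη
  refine (hbeta.mul_bdd (c := Cp) ?_ ?_).mul_bdd (c := Cq) ?_ ?_
  · exact (hS.comp (by fun_prop)).aestronglyMeasurable
  · exact ae_restrict_of_forall_mem measurableSet_Ioo fun y hy => hCp y hy.1
  · exact (hS.comp (by fun_prop)).aestronglyMeasurable
  · refine ae_restrict_of_forall_mem measurableSet_Ioo fun y hy => ?_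
    simpa using hCq (1 - y) (sub_pos.2 hy.2)

end ExtendedBeta

theorem extPhi_integral_repr (ξ₂ ξ₃ p q η x : ℂ)
    (h1 : 0 < ξ₂.re) (h2 : ξ₂.re < ξ₃.re) (hp : 0 < p.re) (hq : 0 < q.re)
    (hη : -1 < η.re) :
    extPhi η p q ξ₂ ξ₃ x =
      (1 / Complex.betaIntegral ξ₂ (ξ₃ - ξ₂)) *
        ∫ y in (0:ℝ)..1,
          (y : ℂ) ^ (ξ₂ - 1) * ((1 : ℂ) - (y : ℂ)) ^ (ξ₃ - ξ₂ - 1) *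
            Complex.exp (x * (y : ℂ)) *
            besselStruve η (-p / (y : ℂ)) * besselStruve η (-q / (1 - (y : ℂ))) := by
  have hk := integrableOn_extBetaKernel hη hp hq h1 (by rw [sub_re]; linarith : 0 < (ξ₃ - ξ₂).re)
  have hsum := hasSum_integral_cexp_mul hk ae_abs_le_one_restrict_Ioo x
  have hmoment : ∀ l : ℕ, ∫ y in Ioo (0 : ℝ) 1, (y : ℂ) ^ l * extBetaKernel η p q ξ₂ (ξ₃ - ξ₂) y
      = extBeta η p q (ξ₂ + l) (ξ₃ - ξ₂) := fun l => by
    rw [extBeta_eq_integral_extBetaKernel]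
    exact setIntegral_congr_fun measurableSet_Ioo fun y hy =>
      (extBetaKernel_add_natCast hy.1 l).symm
  simp only [hmoment] at hsum
  rw [extPhi, intervalIntegral.integral_of_le zero_le_one, integral_Ioc_eq_integral_Ioo]
  calc _ = ∑' l : ℕ, 1 / betaIntegral ξ₂ (ξ₃ - ξ₂) *
        (x ^ l / l.factorial * extBeta η p q (ξ₂ + l) (ξ₃ - ξ₂)) := tsum_congr fun l => by ring
    _ = _ := by
      rw [tsum_mul_left, hsum.tsum_eq]
      congr 2 with y
      rw [extBetaKernel]
      ring
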